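/- Fix an integer r ≥ 0 and real numbers A > 0 and α₀ > 0. Let (f_n)_{n≥1} be a sequence of monic polynomials in ℝ[X] such that every root of every f_n is real and lies in the interval [−A, A], and write d_n = deg f_n. Assume d_n → ∞ as n → ∞, that p_1(f_n) = o(d_n^{1/3}), that p_3(f_n) = o(d_n), and that p_2(f_n) ≥ α₀²·d_n for all n. Then there exists N such that for all n ≥ N, the coefficient c_{2r}(f_n) is nonzero with sign (−1)^r, i.e. (−1)^r · c_{2r}(f_n) > 0. -/

import Mathlib

open Polynomial Filter Asymptotics

open Finset


lemma newton_multiset (s : Multiset ℝ) (k : ℕ) :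
    (k : ℝ) * s.esymm k = (-1) ^ (k + 1) *
      ∑ a ∈ (Finset.HasAntidiagonal.antidiagonal k).filter (fun a => a.1 < k),
        (-1) ^ a.1 * s.esymm a.1 * (s.map (fun x => x ^ a.2)).sum := by
  induction s using Quot.inductionOn with
  | h l =>
    have key := congrArg (MvPolynomial.aeval (fun i : Fin l.length => l.get i))
      (MvPolynomial.mul_esymm_eq_sum (Fin l.length) ℝ k)
    have huniv : (Finset.univ.val.map fun i : Fin l.length => l.get i) = (l : Multiset ℝ) := by
      simp [Fin.univ_def, ← List.ofFn_eq_map, List.ofFn_get]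
    simp only [map_mul, map_natCast, map_pow, map_neg, map_one, map_sum,
      MvPolynomial.aeval_esymm_eq_multiset_esymm, huniv] at key
    rw [show ((Quot.mk _ l : Multiset ℝ)) = (l : Multiset ℝ) from rfl, key]
    congr 1
    apply Finset.sum_congr rfl
    intro a _
    congr 1
    have hps : (MvPolynomial.aeval (fun i : Fin l.length => l.get i))
        (MvPolynomial.psum (Fin l.length) ℝ a.2) = ∑ i, (l.get i) ^ a.2 := by
      simp [MvPolynomial.psum]
    rw [hps, ← huniv, Multiset.map_map]
    rfl


noncomputable def cc (k : ℕ) : ℝ := (-1) ^ k / (2 ^ k * (Nat.factorial k))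

lemma cc_succ (t : ℕ) : (2 * ((t:ℝ) + 1)) * cc (t + 1) = -cc t := by
  have h3 : (2:ℝ) ^ t ≠ 0 := by positivity
  have h4 : (Nat.factorial t : ℝ) ≠ 0 := by positivity
  simp only [cc, Nat.factorial_succ]
  push_cast
  field_simp
  ring

lemma one_isLittleO {g : ℕ → ℝ} (hg : Tendsto g atTop atTop) :
    (fun _ : ℕ => (1:ℝ)) =o[atTop] g := by
  rw [isLittleO_const_left]
  exact Or.inr (tendsto_abs_atTop_atTop.comp hg)

lemma pow_isLittleO {D : ℕ → ℝ} (hD : Tendsto D atTop atTop) {m l : ℕ} (h : m < l) :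
    (fun n => D n ^ m) =o[atTop] fun n => D n ^ l := by
  obtain ⟨j, rfl⟩ : ∃ j, l = m + (j + 1) := ⟨l - m - 1, by omega⟩
  have h1 : (fun _ : ℕ => (1:ℝ)) =o[atTop] fun n => D n ^ (j+1) :=
    one_isLittleO ((tendsto_pow_atTop (Nat.succ_ne_zero j)).comp hD)
  have := (isBigO_refl (fun n => D n ^ m) atTop).mul_isLittleO h1
  refine this.congr (fun n => by ring) (fun n => by rw [pow_add]; ring)

lemma pow_isBigO {D : ℕ → ℝ} (hD1 : ∀ᶠ n in atTop, (1:ℝ) ≤ D n) {m l : ℕ} (h : m ≤ l) :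
    (fun n => D n ^ m) =O[atTop] fun n => D n ^ l := by
  refine IsBigO.of_bound 1 ?_
  filter_upwards [hD1] with n hn
  have h0 : (0:ℝ) ≤ D n := le_trans zero_le_one hn
  rw [one_mul, Real.norm_eq_abs, Real.norm_eq_abs,
    abs_of_nonneg (pow_nonneg h0 _), abs_of_nonneg (pow_nonneg h0 _)]
  exact pow_le_pow_right₀ hn h

lemma abstract_key (D g : ℕ → ℝ) (p e : ℕ → ℕ → ℝ)
    (hDtop : Tendsto D atTop atTop)
    (hgtop : Tendsto g atTop atTop)
    (hg0 : ∀ᶠ n in atTop, 0 ≤ g n)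
    (hgD : ∀ᶠ n in atTop, g n ≤ D n)
    (hg2 : ∀ᶠ n in atTop, g n * g n ≤ D n)
    (hpO : ∀ j, (fun n => p j n) =O[atTop] D)
    (hp1 : (fun n => p 1 n) =o[atTop] g)
    (hp3 : (fun n => p 3 n) =o[atTop] D)
    (he0 : ∀ n, e 0 n = 1)
    (hnewton : ∀ (m n : ℕ), (m : ℝ) * e m n = (-1) ^ (m + 1) *
      ∑ a ∈ (Finset.HasAntidiagonal.antidiagonal m).filter (fun a => a.1 < m),
        (-1) ^ a.1 * e a.1 n * p a.2 n) :
    ∀ k : ℕ,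
      ((fun n => e (2*k) n - cc k * (p 2 n) ^ k) =o[atTop] fun n => D n ^ k)
      ∧ ((fun n => e (2*k+1) n) =o[atTop] fun n => D n ^ k * g n) := by
  have hD1 : ∀ᶠ n in atTop, (1:ℝ) ≤ D n := hDtop.eventually_ge_atTop 1
  have hp2pow : ∀ t : ℕ, (fun n => (p 2 n) ^ t) =O[atTop] fun n => D n ^ t :=
    fun t => (hpO 2).pow t
  have hDg : ∀ k : ℕ, (fun n => D n ^ k) =o[atTop] fun n => D n ^ k * g n := by
    intro k
    have := (isBigO_refl (fun n => D n ^ k) atTop).mul_isLittleO (one_isLittleO hgtop)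
    exact this.congr (fun n => by ring) (fun n => rfl)
  have hDgO : ∀ t : ℕ, (fun n => D n ^ t * g n) =O[atTop] fun n => D n ^ (t+1) := by
    intro t
    refine IsBigO.of_bound 1 ?_
    filter_upwards [hD1, hg0, hgD] with n h1 h0 hgd
    have hD0 : (0:ℝ) ≤ D n := le_trans zero_le_one h1
    rw [one_mul, Real.norm_eq_abs, Real.norm_eq_abs,
      abs_of_nonneg (by positivity), abs_of_nonneg (by positivity), pow_succ]
    exact mul_le_mul_of_nonneg_left hgd (pow_nonneg hD0 t)
  intro k
  induction k using Nat.strong_induction_on with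
  | _ k IH =>
  have hEven : ∀ t, t < k → (fun n => e (2*t) n - cc t * (p 2 n) ^ t) =o[atTop]
      fun n => D n ^ t := fun t ht => (IH t ht).1
  have hOdd : ∀ t, t < k → (fun n => e (2*t+1) n) =o[atTop]
      fun n => D n ^ t * g n := fun t ht => (IH t ht).2
  have hEvenO : ∀ t, t < k → (fun n => e (2*t) n) =O[atTop] fun n => D n ^ t := by
    intro t ht
    have h2 : (fun n => cc t * (p 2 n) ^ t) =O[atTop] fun n => D n ^ t :=
      (hp2pow t).const_mul_left _
    exact ((hEven t ht).isBigO.add h2).congr_left (fun n => by ring)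
  have hO : ∀ m, m < 2*k → (fun n => e m n) =O[atTop] fun n => D n ^ ((m+1)/2) := by
    intro m hm
    rcases Nat.even_or_odd m with ⟨t, rfl⟩ | ⟨t, rfl⟩
    · have h1 : t + t = 2*t := by ring
      rw [h1] at hm ⊢
      have h2 : (2*t+1)/2 = t := by omega
      rw [h2]
      exact hEvenO t (by omega)
    · have h2 : (2*t+1+1)/2 = t + 1 := by omega
      rw [h2]
      exact (hOdd t (by omega)).isBigO.trans (hDgO t)
  have evenK : (fun n => e (2*k) n - cc k * (p 2 n) ^ k) =o[atTop] fun n => D n ^ k := by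
    rcases k with _ | t
    · have hz : ∀ n, e (2*0) n - cc 0 * (p 2 n) ^ 0 = 0 := by
        intro n; simp [he0, cc]
      exact (isLittleO_zero _ _).congr_left (fun n => (hz n).symm)
    · have ha0 : (2*t, 2) ∈ (Finset.HasAntidiagonal.antidiagonal (2*(t+1))).filter
          (fun a => a.1 < 2*(t+1)) := by
        simp only [Finset.mem_filter, Finset.HasAntidiagonal.mem_antidiagonal]
        omega
      have Hbig : (fun n => (2*((t:ℝ)+1)) * (e (2*(t+1)) n - cc (t+1) * (p 2 n) ^ (t+1)))
          =o[atTop] fun n => D n ^ (t+1) := by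
        have hcc := cc_succ t
        have Hsum : (fun n => -((e (2*t) n - cc t * (p 2 n) ^ t) * p 2 n)
            - ∑ a ∈ ((Finset.HasAntidiagonal.antidiagonal (2*(t+1))).filter
                (fun a => a.1 < 2*(t+1))).erase (2*t, 2),
              (-1) ^ a.1 * e a.1 n * p a.2 n)
            =o[atTop] fun n => D n ^ (t+1) := by
          refine IsLittleO.sub ?_ ?_
          · have := ((hEven t (by omega)).mul_isBigO (hpO 2)).neg_left
            exact this.trans_isBigO ((pow_isBigO hD1 (le_refl (t+1))).congr_left
              (fun n => by rw [pow_succ]))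
          · refine IsLittleO.fun_sum ?_
            rintro ⟨a1, a2⟩ ha
            have hane := Finset.ne_of_mem_erase ha
            have ha' := Finset.mem_of_mem_erase ha
            simp only [Finset.mem_filter, Finset.HasAntidiagonal.mem_antidiagonal] at ha'
            obtain ⟨hsum, hlt⟩ := ha'
            have hterm : (fun n => e a1 n * p a2 n) =o[atTop] fun n => D n ^ (t+1) := by
              rcases a2 with _ | _ | _ | _ | i
              · omega
              · obtain rfl : a1 = 2*t+1 := by omega
                have := (hOdd t (by omega)).mul hp1
                refine this.trans_isBigO (IsBigO.of_bound 1 ?_)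
                filter_upwards [hD1, hg0, hg2] with n h1 h0 h2
                have hD0 : (0:ℝ) ≤ D n := le_trans zero_le_one h1
                rw [one_mul, Real.norm_eq_abs, Real.norm_eq_abs,
                  abs_of_nonneg (by positivity), abs_of_nonneg (by positivity)]
                calc D n ^ t * g n * g n = D n ^ t * (g n * g n) := by ring
                  _ ≤ D n ^ t * D n := mul_le_mul_of_nonneg_left h2 (pow_nonneg hD0 t)
                  _ = D n ^ (t+1) := by rw [pow_succ]
              · obtain rfl : a1 = 2*t := by omega
                exact absurd rfl hane
              · have h3 : a1 < 2*(t+1) := by omega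
                have hhalf : (a1+1)/2 ≤ t := by omega
                have := ((hO a1 h3).trans (pow_isBigO hD1 hhalf)).mul_isLittleO hp3
                exact this.trans_isBigO ((pow_isBigO hD1 (le_refl (t+1))).congr_left
                  (fun n => by rw [pow_succ]))
              · have h3 : a1 < 2*(t+1) := by omega
                have hhalf : (a1+1)/2 + 1 ≤ t := by omega
                have hbig := (hO a1 h3).mul (hpO (i+4))
                have h4 : (fun n => D n ^ ((a1+1)/2) * D n) =O[atTop]
                    fun n => D n ^ ((a1+1)/2 + 1) :=
                  (pow_isBigO hD1 (le_refl _)).congr_left (fun n => by rw [pow_succ])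
                exact (hbig.trans h4).trans_isLittleO
                  ((pow_isBigO hD1 hhalf).trans_isLittleO (pow_isLittleO hDtop (by omega)))
            exact (hterm.const_mul_left ((-1:ℝ)^a1)).congr_left (fun n => by ring)
        refine Hsum.congr_left (fun n => ?_)
        have hnew := hnewton (2*(t+1)) n
        rw [← Finset.add_sum_erase _ _ ha0] at hnew
        have hsgn : ((-1:ℝ)) ^ (2*(t+1)+1) = -1 := by
          rw [pow_succ, pow_mul]; norm_num
        have hsgn2 : ((-1:ℝ)) ^ (2*t) = 1 := by
          rw [pow_mul]; norm_num
        rw [hsgn, hsgn2] at hnew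
        push_cast at hnew
        linear_combination (-1:ℝ) * hnew + (p 2 n ^ t * p 2 n) * cc_succ t
      have h2t2 : (0:ℝ) < 2*((t:ℝ)+1) := by positivity
      refine (Hbig.const_mul_left (1/(2*((t:ℝ)+1)))).congr_left (fun n => ?_)
      field_simp
  refine ⟨evenK, ?_⟩
  have hEvKO : (fun n => e (2*k) n) =O[atTop] fun n => D n ^ k := by
    have h2 : (fun n => cc k * (p 2 n) ^ k) =O[atTop] fun n => D n ^ k :=
      (hp2pow k).const_mul_left _
    exact (evenK.isBigO.add h2).congr_left (fun n => by ring)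
  have hk0 : (0:ℝ) < 2*(k:ℝ)+1 := by positivity
  have Hbig : (fun n => (2*(k:ℝ)+1) * e (2*k+1) n) =o[atTop]
      fun n => D n ^ k * g n := by
    have Hsum : (fun n => ∑ a ∈ (Finset.HasAntidiagonal.antidiagonal (2*k+1)).filter
          (fun a => a.1 < 2*k+1), (-1) ^ a.1 * e a.1 n * p a.2 n)
        =o[atTop] fun n => D n ^ k * g n := by
      refine IsLittleO.fun_sum ?_
      rintro ⟨a1, a2⟩ ha
      simp only [Finset.mem_filter, Finset.HasAntidiagonal.mem_antidiagonal] at ha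
      obtain ⟨hsum, hlt⟩ := ha
      have hterm : (fun n => e a1 n * p a2 n) =o[atTop] fun n => D n ^ k * g n := by
        rcases a2 with _ | _ | _ | i
        · omega
        · obtain rfl : a1 = 2*k := by omega
          exact hEvKO.mul_isLittleO hp1
        · obtain ⟨t, rfl⟩ : ∃ t, k = t + 1 := ⟨k - 1, by omega⟩
          obtain rfl : a1 = 2*t+1 := by omega
          have := (hOdd t (by omega)).mul_isBigO (hpO 2)
          exact this.congr (fun n => rfl) (fun n => by rw [pow_succ]; ring)
        · have h3 : a1 < 2*k := by omega
          have hhalf : (a1+1)/2 + 1 ≤ k := by omega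
          have hbig := (hO a1 h3).mul (hpO (i+3))
          have h4 : (fun n => D n ^ ((a1+1)/2) * D n) =O[atTop]
              fun n => D n ^ ((a1+1)/2+1) :=
            (pow_isBigO hD1 (le_refl _)).congr_left (fun n => by rw [pow_succ])
          exact ((hbig.trans h4).trans (pow_isBigO hD1 hhalf)).trans_isLittleO (hDg k)
      exact (hterm.const_mul_left ((-1:ℝ)^a1)).congr_left (fun n => by ring)
    refine Hsum.congr_left (fun n => ?_)
    have hnew := hnewton (2*k+1) n
    have hsgn : ((-1:ℝ)) ^ (2*k+1+1) = 1 := by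
      rw [pow_succ, pow_succ, pow_mul]; norm_num
    rw [hsgn, one_mul] at hnew
    push_cast at hnew
    linear_combination -hnew
  refine (Hbig.const_mul_left (1/(2*(k:ℝ)+1))).congr_left (fun n => ?_)
  field_simp


/-- Under the same hypotheses, the even-indexed coefficient `c_{2r}(fₙ)` eventually
has sign `(-1)^r`. -/
theorem coeff_two_r_sign (r : ℕ) (A α₀ : ℝ) (hA : 0 < A) (hα : 0 < α₀)
    (f : ℕ → Polynomial ℝ)
    (hmonic : ∀ n, (f n).Monic)
    (hsplit : ∀ n, Multiset.card (f n).roots = (f n).natDegree)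
    (hroots : ∀ n, ∀ x ∈ (f n).roots, x ∈ Set.Icc (-A) A)
    (hdeg : Tendsto (fun n => (f n).natDegree) atTop atTop)
    (hp1 : (fun n => ((f n).roots.map (fun x => x ^ 1)).sum) =o[atTop]
      fun n => ((f n).natDegree : ℝ) ^ ((1 : ℝ) / 3))
    (hp3 : (fun n => ((f n).roots.map (fun x => x ^ 3)).sum) =o[atTop]
      fun n => ((f n).natDegree : ℝ))
    (hp2 : ∀ n, α₀ ^ 2 * ((f n).natDegree : ℝ) ≤ ((f n).roots.map (fun x => x ^ 2)).sum) :
    ∃ N : ℕ, ∀ n ≥ N, 0 < (-1 : ℝ) ^ r * (f n).coeff ((f n).natDegree - 2 * r) := by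
  have hDtop : Tendsto (fun n => ((f n).natDegree : ℝ)) atTop atTop :=
    tendsto_natCast_atTop_atTop.comp hdeg
  have hD1 : ∀ᶠ n in atTop, (1:ℝ) ≤ ((f n).natDegree : ℝ) := hDtop.eventually_ge_atTop 1
  have hgtop : Tendsto (fun n => ((f n).natDegree : ℝ) ^ ((1:ℝ)/3)) atTop atTop :=
    (tendsto_rpow_atTop (by norm_num : (0:ℝ) < 1/3)).comp hDtop
  have hpO : ∀ j, (fun n => ((f n).roots.map (fun x => x ^ j)).sum) =O[atTop]
      fun n => ((f n).natDegree : ℝ) := by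
    intro j
    refine IsBigO.of_bound (A ^ j) (Eventually.of_forall fun n => ?_)
    rw [Real.norm_eq_abs, Real.norm_eq_abs,
      abs_of_nonneg (by positivity : (0:ℝ) ≤ ((f n).natDegree : ℝ))]
    calc |((f n).roots.map (fun x => x ^ j)).sum|
        ≤ (((f n).roots.map (fun x => x ^ j)).map abs).sum := Multiset.abs_sum_le_sum_abs
      _ = ((f n).roots.map (fun x => |x ^ j|)).sum := by rw [Multiset.map_map]; rfl
      _ ≤ ((f n).roots.map (fun _ => A ^ j)).sum := by
          refine Multiset.sum_map_le_sum_map _ _ fun x hx => ?_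
          rw [abs_pow]
          refine pow_le_pow_left₀ (abs_nonneg x) ?_ j
          obtain ⟨h1, h2⟩ := hroots n x hx
          exact abs_le.mpr ⟨h1, h2⟩
      _ = A ^ j * ((f n).natDegree : ℝ) := by
          rw [Multiset.map_const', Multiset.sum_replicate, hsplit n, nsmul_eq_mul, mul_comm]
  have key := abstract_key (fun n => ((f n).natDegree : ℝ))
    (fun n => ((f n).natDegree : ℝ) ^ ((1:ℝ)/3))
    (fun j n => ((f n).roots.map (fun x => x ^ j)).sum)
    (fun m n => (f n).roots.esymm m)
    hDtop hgtop
    (Eventually.of_forall fun n => Real.rpow_nonneg (Nat.cast_nonneg _) _)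
    (by
      filter_upwards [hD1] with n h1
      calc ((f n).natDegree : ℝ) ^ ((1:ℝ)/3)
          ≤ ((f n).natDegree : ℝ) ^ (1:ℝ) :=
            Real.rpow_le_rpow_of_exponent_le h1 (by norm_num)
        _ = ((f n).natDegree : ℝ) := Real.rpow_one _)
    (by
      filter_upwards [hD1] with n h1
      have hx : (0:ℝ) < ((f n).natDegree : ℝ) := lt_of_lt_of_le zero_lt_one h1
      calc ((f n).natDegree : ℝ) ^ ((1:ℝ)/3) * ((f n).natDegree : ℝ) ^ ((1:ℝ)/3)
          = ((f n).natDegree : ℝ) ^ ((1:ℝ)/3 + (1:ℝ)/3) := (Real.rpow_add hx _ _).symm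
        _ ≤ ((f n).natDegree : ℝ) ^ (1:ℝ) :=
            Real.rpow_le_rpow_of_exponent_le h1 (by norm_num)
        _ = ((f n).natDegree : ℝ) := Real.rpow_one _)
    hpO hp1 hp3
    (fun n => by simp [Multiset.esymm])
    (fun m n => newton_multiset (f n).roots m)
  have evenK := (key r).1
  -- extract the eventual bound
  have hF : (0:ℝ) < 2 ^ r * (Nat.factorial r : ℝ) := by positivity
  have hα2r : (0:ℝ) < α₀ ^ (2*r) := by positivity
  have hc : (0:ℝ) < α₀ ^ (2*r) / (2 * (2 ^ r * (Nat.factorial r : ℝ))) := by positivity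
  have hev := (isLittleO_iff.mp evenK) hc
  have h2r : ∀ᶠ n in atTop, 2*r + 1 ≤ (f n).natDegree := hdeg.eventually_ge_atTop (2*r+1)
  have hall := (hev.and h2r).and hD1
  rw [eventually_atTop] at hall
  obtain ⟨N, hN⟩ := hall
  refine ⟨N, fun n hn => ?_⟩
  obtain ⟨⟨hev', h2r'⟩, hD1'⟩ := hN n hn
  set d := (f n).natDegree with hd
  have h2rd : 2*r ≤ d := by omega
  -- rewrite the coefficient
  have hcoeff : (f n).coeff (d - 2*r) = (f n).roots.esymm (2*r) := by
    have := Polynomial.coeff_eq_esymm_roots_of_card (hsplit n)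
      (k := d - 2*r) (Nat.sub_le _ _)
    rw [this, (hmonic n).leadingCoeff, Nat.sub_sub_self h2rd, one_mul, pow_mul]
    norm_num
  rw [hcoeff]
  -- numeric estimates
  set E := (f n).roots.esymm (2*r) - cc r * (((f n).roots.map (fun x => x ^ 2)).sum) ^ r
    with hE
  set D := (d:ℝ) with hDdef
  have hD0 : (0:ℝ) < D := lt_of_lt_of_le zero_lt_one hD1'
  have hDr : (0:ℝ) < D ^ r := pow_pos hD0 r
  have hEbound : |E| ≤ α₀ ^ (2*r) / (2 * (2 ^ r * (Nat.factorial r : ℝ))) * D ^ r := by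
    have := hev'
    rw [Real.norm_eq_abs, Real.norm_eq_abs, abs_of_nonneg (le_of_lt hDr)] at this
    exact this
  have hp2r : α₀ ^ (2*r) * D ^ r ≤ (((f n).roots.map (fun x => x ^ 2)).sum) ^ r := by
    have h0 : (0:ℝ) ≤ α₀ ^ 2 * D := by positivity
    calc α₀ ^ (2*r) * D ^ r = (α₀ ^ 2 * D) ^ r := by rw [mul_pow, pow_mul]
      _ ≤ (((f n).roots.map (fun x => x ^ 2)).sum) ^ r :=
          pow_le_pow_left₀ h0 (hp2 n) r
  have hesymm : (f n).roots.esymm (2*r) = cc r *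
      (((f n).roots.map (fun x => x ^ 2)).sum) ^ r + E := by rw [hE]; ring
  rw [hesymm]
  have hccr : (-1:ℝ) ^ r * cc r = 1 / (2 ^ r * (Nat.factorial r : ℝ)) := by
    rw [cc]
    field_simp
    rw [← pow_mul, pow_mul']
    norm_num
  have hnegabs : -|E| ≤ (-1:ℝ) ^ r * E := by
    have := neg_abs_le ((-1:ℝ) ^ r * E)
    have habs : |(-1:ℝ) ^ r * E| = |E| := by
      rw [abs_mul, abs_pow, abs_neg, abs_one, one_pow, one_mul]
    rw [habs] at this
    exact this
  have expand : (-1:ℝ) ^ r * (cc r * (((f n).roots.map (fun x => x ^ 2)).sum) ^ r + E)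
      = 1 / (2 ^ r * (Nat.factorial r : ℝ)) * (((f n).roots.map (fun x => x ^ 2)).sum) ^ r
        + (-1:ℝ) ^ r * E := by
    rw [mul_add, ← mul_assoc, hccr]
  rw [expand]
  have h1 : 1 / (2 ^ r * (Nat.factorial r : ℝ)) * α₀ ^ (2*r) * D ^ r
      ≤ 1 / (2 ^ r * (Nat.factorial r : ℝ)) * (((f n).roots.map (fun x => x ^ 2)).sum) ^ r := by
    rw [mul_assoc]
    exact mul_le_mul_of_nonneg_left hp2r (by positivity)
  have hpos : 0 < 1 / (2 ^ r * (Nat.factorial r : ℝ)) * α₀ ^ (2*r) * D ^ r := by positivity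
  have heq2 : α₀ ^ (2*r) / (2 * (2 ^ r * (Nat.factorial r : ℝ))) * D ^ r
      = 1 / (2 ^ r * (Nat.factorial r : ℝ)) * α₀ ^ (2*r) * D ^ r / 2 := by
    field_simp
  rw [heq2] at hEbound
  have t2 : -(1 / (2 ^ r * (Nat.factorial r : ℝ)) * α₀ ^ (2*r) * D ^ r / 2)
      ≤ (-1:ℝ) ^ r * E := le_trans (neg_le_neg hEbound) hnegabs
  have t3 : (0:ℝ) < 1 / (2 ^ r * (Nat.factorial r : ℝ)) * α₀ ^ (2*r) * D ^ r
      - 1 / (2 ^ r * (Nat.factorial r : ℝ)) * α₀ ^ (2*r) * D ^ r / 2 := by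
    have hh : 1 / (2 ^ r * (Nat.factorial r : ℝ)) * α₀ ^ (2*r) * D ^ r
        - 1 / (2 ^ r * (Nat.factorial r : ℝ)) * α₀ ^ (2*r) * D ^ r / 2
        = 1 / (2 ^ r * (Nat.factorial r : ℝ)) * α₀ ^ (2*r) * D ^ r / 2 := by ring
    rw [hh]
    positivity
  refine lt_of_lt_of_le t3 ?_
  rw [sub_eq_add_neg]
  exact add_le_add h1 t2
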